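/- The net graph—the graph on six vertices consisting of a triangle with a pendant vertex attached to each triangle vertex—is a circular arc graph but not a proper circular arc graph; consequently, the complete signed graph whose positive subgraph is the net has no valid drawing in the circumference. -/

import Mathlib

open Real Set

noncomputable def cmod (x : ℝ) : ℝ := x - 2 * π * ⌊x / (2 * π)⌋

noncomputable def cdist (p q : ℝ) : ℝ := min (cmod (p - q)) (cmod (q - p))

def Mr (p : ℝ) : Set ℝ := {x | ∃ t, 0 ≤ t ∧ t ≤ π ∧ x = cmod (p + t)}
def Ml (p : ℝ) : Set ℝ := {x | ∃ t, 0 ≤ t ∧ t ≤ π ∧ x = cmod (p - t)}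

structure SignedGraph (V : Type*) where
  pos : SimpleGraph V
  neg : SimpleGraph V
  disjoint : ∀ i j, ¬ (pos.Adj i j ∧ neg.Adj i j)

def IsDrawing {V : Type*} (D : V → ℝ) : Prop :=
  Function.Injective D ∧ ∀ v, D v ∈ Set.Ico (0 : ℝ) (2 * π)

def IsValidDrawing {V : Type*} (G : SignedGraph V) (D : V → ℝ) : Prop :=
  IsDrawing D ∧ ∀ i j k, G.pos.Adj i j → G.neg.Adj i k →
    cdist (D i) (D j) < cdist (D i) (D k)

def IsAlmostValidDrawing {V : Type*} (G : SignedGraph V) (D : V → ℝ) : Prop :=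
  IsDrawing D ∧ ∃ δ > 0, ∀ i j k, G.pos.Adj i j → G.neg.Adj i k →
    cdist (D i) (D j) ≤ δ ∧ δ ≤ cdist (D i) (D k)

def arcC (s ℓ : ℝ) : Set ℝ := {x | x ∈ Set.Ico (0 : ℝ) (2 * π) ∧ cmod (x - s) ≤ ℓ}

def arcGen (s ℓ : ℝ) (inl inr : Bool) : Set ℝ :=
  {x | x ∈ Set.Ico (0 : ℝ) (2 * π) ∧
    (inl = false → 0 < cmod (x - s)) ∧
    (inr = true → cmod (x - s) ≤ ℓ) ∧ (inr = false → cmod (x - s) < ℓ)}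

def IsCircularArcModel {V : Type*} (G : SimpleGraph V) (A : V → Set ℝ) : Prop :=
  (∀ v, ∃ s ℓ, 0 < ℓ ∧ ℓ < 2 * π ∧ A v = arcC s ℓ) ∧
  ∀ i j, i ≠ j → (G.Adj i j ↔ (A i ∩ A j).Nonempty)

def IsCircularArcGraph {V : Type*} (G : SimpleGraph V) : Prop :=
  ∃ A, IsCircularArcModel G A

def IsProperCircularArcGraph {V : Type*} (G : SimpleGraph V) : Prop :=
  ∃ A : V → Set ℝ, IsCircularArcModel G A ∧ ∀ i j, ¬ A i ⊂ A j

/-- The net: a triangle a b c with pendant vertices a' b' c'. -/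
def netGraph : SimpleGraph (Fin 6) :=
  SimpleGraph.fromRel (fun i j =>
    ((i, j) : Fin 6 × Fin 6) ∈
      ([(0, 1), (1, 2), (2, 0), (0, 3), (1, 4), (2, 5)] : List (Fin 6 × Fin 6)))

/-!
Points of the circle are reals in `[0, 2π)`, and `cmod (z - p)` is the counterclockwise position
of `z` seen from `p`; circular-arc models are invariant under rotation.

In any circular-arc model of the net, the arc of a pendant vertex `a'` lies inside the arc of its
neighbour `a`: cutting the circle at a point of the arc of `a'` outside that of `a` turns the arcs
of `a, b, c, b', c'` into intervals of a line, with the interval of `a` reaching past those of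
`b'` and `c'` on one side, and no interval representation of the net without `a'` does that.
Hence no model is proper.

In a valid drawing, the chord of a positive edge `ij` cannot cross the chord `kl` of two negative
neighbours of `i` or `j`: the shorter arc between `i` and `j` would contain `k` or `l`, putting it
closer to both. Chaining this along the edges of the net, none of the three pairings of
`a, a', b', c'` would cross, which is impossible for four points on a circle.
-/

theorem cmod_eq_toIcoMod (x : ℝ) : cmod x = toIcoMod two_pi_pos 0 x := by
  rw [toIcoMod_eq_fract_mul, Int.fract, cmod]
  field_simp

theorem cmod_mem_Ico (x : ℝ) : cmod x ∈ Ico 0 (2 * π) := by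
  simpa [cmod_eq_toIcoMod] using toIcoMod_mem_Ico' two_pi_pos x

theorem cmod_nonneg (x : ℝ) : 0 ≤ cmod x := (cmod_mem_Ico x).1

theorem cmod_lt_two_pi (x : ℝ) : cmod x < 2 * π := (cmod_mem_Ico x).2

theorem cmod_eq_cmod_iff {a b : ℝ} : cmod a = cmod b ↔ a ≡ b [PMOD 2 * π] := by
  simp only [cmod_eq_toIcoMod, toIcoMod_inj]

theorem cmod_modEq (x : ℝ) : cmod x ≡ x [PMOD 2 * π] := by
  rw [← cmod_eq_cmod_iff, cmod_eq_toIcoMod, cmod_eq_toIcoMod, toIcoMod_toIcoMod]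

theorem cmod_of_mem_Ico {x : ℝ} (hx : x ∈ Ico 0 (2 * π)) : cmod x = x := by
  rw [cmod_eq_toIcoMod, toIcoMod_eq_self, zero_add]
  exact hx

theorem cmod_zero : cmod 0 = 0 := cmod_of_mem_Ico ⟨le_rfl, two_pi_pos⟩

theorem cmod_of_mem_Ico_neg {x : ℝ} (h₁ : -(2 * π) ≤ x) (h₂ : x < 0) : cmod x = x + 2 * π := by
  rw [← cmod_of_mem_Ico (x := x + 2 * π) ⟨by linarith, by linarith⟩, cmod_eq_toIcoMod,
    cmod_eq_toIcoMod, toIcoMod_add_right]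

theorem cmod_sub_cmod_sub (p u v : ℝ) : cmod (cmod (u - p) - cmod (v - p)) = cmod (u - v) :=
  cmod_eq_cmod_iff.2 <| by
    simpa using ((cmod_modEq (u - p)).sub (cmod_modEq (v - p)))

theorem cmod_sub_of_le {p u v : ℝ} (h : cmod (v - p) ≤ cmod (u - p)) :
    cmod (u - v) = cmod (u - p) - cmod (v - p) := by
  have := cmod_lt_two_pi (u - p)
  have := cmod_nonneg (v - p)
  rw [← cmod_sub_cmod_sub p, cmod_of_mem_Ico ⟨by linarith, by linarith⟩]

theorem cmod_sub_of_lt {p u v : ℝ} (h : cmod (u - p) < cmod (v - p)) :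
    cmod (u - v) = cmod (u - p) - cmod (v - p) + 2 * π := by
  have := cmod_lt_two_pi (v - p)
  have := cmod_nonneg (u - p)
  rw [← cmod_sub_cmod_sub p, cmod_of_mem_Ico_neg (by linarith) (by linarith)]

theorem eq_of_cmod_sub_eq {p u v : ℝ} (hu : u ∈ Ico 0 (2 * π)) (hv : v ∈ Ico 0 (2 * π))
    (h : cmod (u - p) = cmod (v - p)) : u = v := by
  rw [← cmod_of_mem_Ico hu, ← cmod_of_mem_Ico hv, cmod_eq_cmod_iff]
  exact (cmod_eq_cmod_iff.1 h).sub_right_cancel' p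

theorem cmod_cmod_sub_add {x y : ℝ} (hy : y ∈ Ico 0 (2 * π)) : cmod (cmod (y - x) + x) = y := by
  refine (cmod_eq_cmod_iff.2 ?_).trans (cmod_of_mem_Ico hy)
  simpa using (cmod_modEq (y - x)).add_right x

theorem arcC_subset_Ico (s ℓ : ℝ) : arcC s ℓ ⊆ Ico 0 (2 * π) := fun _ hz => hz.1

theorem arcC_cmod (s ℓ : ℝ) : arcC (cmod s) ℓ = arcC s ℓ := by
  ext z
  simp only [arcC, mem_ofPred_eq,
    cmod_eq_cmod_iff.2 ((cmod_modEq s).sub_left z : z - cmod s ≡ z - s [PMOD 2 * π])]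

theorem mem_arcC_iff {s ℓ z : ℝ} (hs : s ∈ Ico 0 (2 * π)) (hℓ : ℓ < 2 * π) :
    z ∈ arcC s ℓ ↔ z ∈ Ico 0 (2 * π) ∧ ((s ≤ z ∧ z ≤ s + ℓ) ∨ z + 2 * π ≤ s + ℓ) := by
  refine and_congr_right fun hz => ?_
  rcases le_or_gt s z with hsz | hzs
  · rw [cmod_of_mem_Ico ⟨by linarith, by linarith [hz.2, hs.1]⟩]
    exact ⟨fun h => .inl ⟨hsz, by linarith⟩, by rintro (⟨-, h⟩ | h) <;> linarith⟩
  · rw [cmod_of_mem_Ico_neg (by linarith [hz.1, hs.2]) (by linarith)]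
    exact ⟨fun h => .inr (by linarith), by rintro (⟨h, -⟩ | h) <;> linarith⟩

theorem arcC_eq_Icc_of_zero_not_mem {s ℓ : ℝ} (hs : s ∈ Ico 0 (2 * π)) (hℓ₀ : 0 ≤ ℓ)
    (hℓ : ℓ < 2 * π) (h0 : (0 : ℝ) ∉ arcC s ℓ) :
    arcC s ℓ = Icc s (s + ℓ) ∧ s + ℓ < 2 * π := by
  rw [mem_arcC_iff hs hℓ] at h0
  have hsℓ : s + ℓ < 2 * π := by
    by_contra! h
    exact h0 ⟨⟨le_rfl, two_pi_pos⟩, .inr (by linarith)⟩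
  have hs₀ : 0 < s := by
    by_contra! h
    exact h0 ⟨⟨le_rfl, two_pi_pos⟩, .inl ⟨h, by linarith [hs.1]⟩⟩
  refine ⟨Set.ext fun z => ?_, hsℓ⟩
  rw [mem_arcC_iff hs hℓ, mem_Icc]
  constructor
  · rintro ⟨hz, h | h⟩
    · exact h
    · linarith [hz.1]
  · intro h
    exact ⟨⟨by linarith [h.1], by linarith [h.2]⟩, .inl h⟩

theorem Icc_subset_or_Ico_subset_arcC {s ℓ y : ℝ} (hs : s ∈ Ico 0 (2 * π)) (hℓ : ℓ < 2 * π)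
    (h0 : (0 : ℝ) ∈ arcC s ℓ) (hy : y ∈ arcC s ℓ) :
    Icc 0 y ⊆ arcC s ℓ ∨ Ico y (2 * π) ⊆ arcC s ℓ := by
  rw [mem_arcC_iff hs hℓ] at h0 hy
  obtain ⟨⟨hy₀, hy₂⟩, hy⟩ := hy
  simp only [subset_def, mem_Icc, mem_Ico, mem_arcC_iff hs hℓ]
  rcases h0.2 with ⟨hs₀, -⟩ | hwrap
  · left
    intro z hz
    have : s = 0 := le_antisymm hs₀ hs.1
    rcases hy with h | h <;> exact ⟨⟨hz.1, by linarith⟩, .inl ⟨by linarith, by linarith⟩⟩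
  · rcases hy with h | h
    · right
      intro z hz
      exact ⟨⟨by linarith, hz.2⟩, .inl ⟨by linarith, by linarith⟩⟩
    · left
      intro z hz
      exact ⟨⟨hz.1, by linarith⟩, .inr (by linarith)⟩

theorem mem_arcC_of_cmod_sub_le {s t m z : ℝ} (hs : s ∈ Ico 0 (2 * π)) (hzt : cmod (z - t) ≤ m)
    (hle : cmod (z - s) ≤ cmod (z - t)) : s ∈ arcC t m := by
  have h : cmod (s - t) = cmod (cmod (z - t) - cmod (z - s)) := cmod_eq_cmod_iff.2 <| by
    simpa only [sub_sub_sub_cancel_left] using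
      ((cmod_modEq (z - t)).sub (cmod_modEq (z - s))).symm
  have := cmod_lt_two_pi (z - t)
  have := cmod_nonneg (z - s)
  refine ⟨hs, ?_⟩
  rw [h, cmod_of_mem_Ico ⟨by linarith, by linarith⟩]
  linarith

theorem arcC_inter_nonempty_iff {s t ℓ m : ℝ} (hs : s ∈ Ico 0 (2 * π)) (ht : t ∈ Ico 0 (2 * π))
    (hℓ : 0 ≤ ℓ) (hm : 0 ≤ m) :
    (arcC s ℓ ∩ arcC t m).Nonempty ↔ s ∈ arcC t m ∨ t ∈ arcC s ℓ := by
  constructor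
  · rintro ⟨z, ⟨-, hzs⟩, ⟨-, hzt⟩⟩
    rcases le_total (cmod (z - s)) (cmod (z - t)) with hle | hle
    · exact .inl (mem_arcC_of_cmod_sub_le hs hzt hle)
    · exact .inr (mem_arcC_of_cmod_sub_le ht hzs hle)
  · rintro (h | h)
    · exact ⟨s, ⟨hs, by rwa [sub_self, cmod_zero]⟩, h⟩
    · exact ⟨t, h, ⟨ht, by rwa [sub_self, cmod_zero]⟩⟩

theorem IsCircularArcModel.exists_eq_arcC {V : Type*} {G : SimpleGraph V} {A : V → Set ℝ}
    (hA : IsCircularArcModel G A) (v : V) :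
    ∃ s ℓ, s ∈ Ico 0 (2 * π) ∧ 0 < ℓ ∧ ℓ < 2 * π ∧ A v = arcC s ℓ := by
  obtain ⟨s, ℓ, hℓ₀, hℓ, hv⟩ := hA.1 v
  exact ⟨cmod s, ℓ, cmod_mem_Ico s, hℓ₀, hℓ, hv.trans (arcC_cmod s ℓ).symm⟩

theorem IsCircularArcModel.subset_Ico {V : Type*} {G : SimpleGraph V} {A : V → Set ℝ}
    (hA : IsCircularArcModel G A) (v : V) : A v ⊆ Ico 0 (2 * π) := by
  obtain ⟨s, ℓ, -, -, hv⟩ := hA.1 v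
  exact hv ▸ arcC_subset_Ico s ℓ

theorem IsCircularArcModel.exists_eq_Icc {V : Type*} {G : SimpleGraph V} {A : V → Set ℝ}
    (hA : IsCircularArcModel G A) {v : V} (h0 : (0 : ℝ) ∉ A v) :
    ∃ l h, 0 ≤ l ∧ l ≤ h ∧ h < 2 * π ∧ A v = Icc l h := by
  obtain ⟨s, ℓ, hs, hℓ₀, hℓ, hv⟩ := hA.exists_eq_arcC v
  obtain ⟨hIcc, hsℓ⟩ := arcC_eq_Icc_of_zero_not_mem hs hℓ₀.le hℓ (hv ▸ h0)
  exact ⟨s, s + ℓ, hs.1, by linarith, hsℓ, hv.trans hIcc⟩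

theorem IsCircularArcModel.Icc_subset_or_Ico_subset {V : Type*} {G : SimpleGraph V}
    {A : V → Set ℝ} (hA : IsCircularArcModel G A) {v : V} {y : ℝ} (h0 : (0 : ℝ) ∈ A v)
    (hy : y ∈ A v) : Icc 0 y ⊆ A v ∨ Ico y (2 * π) ⊆ A v := by
  obtain ⟨s, ℓ, hs, -, hℓ, hv⟩ := hA.exists_eq_arcC v
  rw [hv] at h0 hy ⊢
  exact Icc_subset_or_Ico_subset_arcC hs hℓ h0 hy

theorem IsCircularArcModel.rotate {V : Type*} {G : SimpleGraph V} {A : V → Set ℝ}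
    (hA : IsCircularArcModel G A) (x : ℝ) :
    IsCircularArcModel G fun v => {z ∈ Ico 0 (2 * π) | cmod (z + x) ∈ A v} := by
  refine ⟨fun v => ?_, fun i j hij => (hA.2 i j hij).trans ?_⟩
  · obtain ⟨s, ℓ, hℓ₀, hℓ, hv⟩ := hA.1 v
    refine ⟨cmod (s - x), ℓ, hℓ₀, hℓ, Set.ext fun z => ?_⟩
    have hmod : cmod (cmod (z + x) - s) = cmod (z - cmod (s - x)) := cmod_eq_cmod_iff.2 <|
      calc cmod (z + x) - s ≡ z + x - s [PMOD 2 * π] := (cmod_modEq _).sub_right s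
        _ = z - (s - x) := by ring
        _ ≡ z - cmod (s - x) [PMOD 2 * π] := ((cmod_modEq _).sub_left z).symm
    simp only [hv, arcC, mem_ofPred_eq, hmod, cmod_mem_Ico, true_and]
  · constructor
    · rintro ⟨y, hyi, hyj⟩
      have hy : y ∈ Ico 0 (2 * π) := hA.subset_Ico i hyi
      refine ⟨cmod (y - x), ⟨cmod_mem_Ico _, ?_⟩, ⟨cmod_mem_Ico _, ?_⟩⟩ <;>
        rwa [cmod_cmod_sub_add hy]
    · rintro ⟨z, ⟨-, hzi⟩, ⟨-, hzj⟩⟩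
      exact ⟨_, hzi, hzj⟩

instance : DecidableRel netGraph.Adj :=
  fun i j => decidable_of_iff _ (SimpleGraph.fromRel_adj _ i j).symm

theorem pi_div_twelve_mul_mem_arcC_iff {a b r : ℝ} (ha : a ∈ Ico 0 24) (hb : b ∈ Ico 0 24)
    (hr : r < 24) :
    π / 12 * a ∈ arcC (π / 12 * b) (π / 12 * r) ↔ (b ≤ a ∧ a ≤ b + r) ∨ a + 24 ≤ b + r := by
  have hc : 0 < π / 12 := by positivity
  have h2π : 2 * π = π / 12 * 24 := by ring
  have hIco : ∀ {x}, x ∈ Ico (0 : ℝ) 24 → π / 12 * x ∈ Ico 0 (2 * π) := fun hx =>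
    ⟨by nlinarith [hx.1], by nlinarith [hx.2]⟩
  rw [mem_arcC_iff (hIco hb) (by nlinarith), and_iff_right (hIco ha), h2π]
  simp only [← mul_add, mul_le_mul_iff_right₀ hc]

/-- Arcs in units of `π / 12`: the triangle arcs `[2, 12]`, `[10, 20]`, `[18, 28]` overlap
pairwise, and each pendant arc lies in the part covered by its triangle arc alone. -/
def netArcStart : Fin 6 → ℝ := ![2, 10, 18, 6, 14, 21]

def netArcLength : Fin 6 → ℝ := ![10, 10, 10, 2, 2, 1]

theorem net_isCircularArcGraph : IsCircularArcGraph netGraph := by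
  have hstart : ∀ v, netArcStart v ∈ Ico 0 24 := by
    intro v; fin_cases v <;> norm_num [netArcStart]
  have hlength : ∀ v, 0 < netArcLength v ∧ netArcLength v < 24 := by
    intro v; fin_cases v <;> norm_num [netArcLength]
  have hIco : ∀ v, π / 12 * netArcStart v ∈ Ico 0 (2 * π) := fun v =>
    ⟨by nlinarith [pi_pos, (hstart v).1], by nlinarith [pi_pos, (hstart v).2]⟩
  refine ⟨fun v => arcC (π / 12 * netArcStart v) (π / 12 * netArcLength v), fun v =>
    ⟨_, _, by nlinarith [pi_pos, hlength v], by nlinarith [pi_pos, hlength v], rfl⟩,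
    fun i j hij => ?_⟩
  rw [arcC_inter_nonempty_iff (hIco i) (hIco j) (by nlinarith [pi_pos, hlength i])
    (by nlinarith [pi_pos, hlength j]), pi_div_twelve_mul_mem_arcC_iff (hstart i) (hstart j)
    (hlength j).2, pi_div_twelve_mul_mem_arcC_iff (hstart j) (hstart i) (hlength i).2]
  fin_cases i <;> fin_cases j <;> simp +decide [netArcStart, netArcLength] at hij ⊢ <;> norm_num

theorem Icc_inter_Icc_nonempty_iff {α : Type*} [LinearOrder α] {a b c d : α} (hab : a ≤ b)
    (hcd : c ≤ d) :
    (Icc a b ∩ Icc c d).Nonempty ↔ a ≤ d ∧ c ≤ b := by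
  simp only [Icc_inter_Icc, nonempty_Icc, sup_le_iff, le_inf_iff]
  tauto

theorem net_not_intervals {l h : Fin 6 → ℝ} {y : ℝ} (hlh : ∀ v, v ≠ 3 → l v ≤ h v)
    (hadj : ∀ u v, u ≠ 3 → v ≠ 3 → u ≠ v →
      (netGraph.Adj u v ↔ (Icc (l u) (h u) ∩ Icc (l v) (h v)).Nonempty))
    (hy : y ∈ Icc (l 0) (h 0))
    (hside : (y < l 4 ∧ y < l 5) ∨ (h 4 < y ∧ h 5 < y)) : False := by
  have hadj' : ∀ u v, u ≠ 3 → v ≠ 3 → u ≠ v → (netGraph.Adj u v ↔ l u ≤ h v ∧ l v ≤ h u) :=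
    fun u v hu hv huv =>
      (hadj u v hu hv huv).trans (Icc_inter_Icc_nonempty_iff (hlh u hu) (hlh v hv))
  have h02 := (hadj' 0 2 (by decide) (by decide) (by decide)).1 (by decide)
  have h01 := (hadj' 0 1 (by decide) (by decide) (by decide)).1 (by decide)
  have h14 := (hadj' 1 4 (by decide) (by decide) (by decide)).1 (by decide)
  have h25 := (hadj' 2 5 (by decide) (by decide) (by decide)).1 (by decide)
  have n04 := mt (hadj' 0 4 (by decide) (by decide) (by decide)).2 (by decide)
  have n05 := mt (hadj' 0 5 (by decide) (by decide) (by decide)).2 (by decide)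
  have n15 := mt (hadj' 1 5 (by decide) (by decide) (by decide)).2 (by decide)
  have n24 := mt (hadj' 2 4 (by decide) (by decide) (by decide)).2 (by decide)
  have n45 := mt (hadj' 4 5 (by decide) (by decide) (by decide)).2 (by decide)
  simp only [not_and_or, not_le] at n04 n05 n15 n24 n45
  have := hlh 4 (by decide)
  have := hlh 5 (by decide)
  obtain ⟨hy₁, hy₂⟩ := hy
  -- Say `y < l 4, l 5`. Then the interval of `0` ends before those of `4` and `5`, and whichever
  -- of `4`, `5` comes first lies inside the interval of the triangle vertex adjacent to the other.
  rcases hside with ⟨_, _⟩ | ⟨_, _⟩ <;>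
    rcases n04 with _ | _ <;> rcases n05 with _ | _ <;> rcases n45 with _ | _ <;>
      rcases n15 with _ | _ <;> rcases n24 with _ | _ <;> linarith

theorem IsCircularArcModel.net_zero_mem {A : Fin 6 → Set ℝ}
    (hA : IsCircularArcModel netGraph A) (h3 : (0 : ℝ) ∈ A 3) : (0 : ℝ) ∈ A 0 := by
  have hdisj : ∀ v, v ≠ 3 → ¬ netGraph.Adj v 3 → ∀ z ∈ A v, z ∉ A 3 :=
    fun v hv hv3 z hzv hz3 => hv3 ((hA.2 v 3 hv).2 ⟨z, hzv, hz3⟩)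
  by_contra h0
  have hIcc : ∀ v, v ≠ 3 → ∃ l h, 0 ≤ l ∧ l ≤ h ∧ h < 2 * π ∧ A v = Icc l h := by
    intro v hv
    refine hA.exists_eq_Icc fun h0v => ?_
    fin_cases v
    exacts [h0 h0v, hdisj 1 hv (by decide) 0 h0v h3, hdisj 2 hv (by decide) 0 h0v h3, hv rfl,
      hdisj 4 hv (by decide) 0 h0v h3, hdisj 5 hv (by decide) 0 h0v h3]
  choose! l h hl₀ hlh hh₂ hAv using hIcc
  have hends : ∀ v, v ≠ 3 → ¬ netGraph.Adj v 3 → l v ∉ A 3 ∧ h v ∉ A 3 := fun v hv hv3 =>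
    ⟨hdisj v hv hv3 _ (hAv v hv ▸ left_mem_Icc.2 (hlh v hv)),
      hdisj v hv hv3 _ (hAv v hv ▸ right_mem_Icc.2 (hlh v hv))⟩
  obtain ⟨hl4, hh4⟩ := hends 4 (by decide) (by decide)
  obtain ⟨hl5, hh5⟩ := hends 5 (by decide) (by decide)
  obtain ⟨y, hy0, hy3⟩ := (hA.2 0 3 (by decide)).1 (by decide)
  refine net_not_intervals (l := l) (h := h) (y := y) hlh (fun u v hu hv huv => ?_)
    (hAv 0 (by decide) ▸ hy0) ?_
  · rw [← hAv u hu, ← hAv v hv]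
    exact hA.2 u v huv
  rcases hA.Icc_subset_or_Ico_subset h3 hy3 with hsub | hsub
  · exact .inl ⟨not_le.1 fun hle => hl4 (hsub ⟨hl₀ 4 (by decide), hle⟩),
      not_le.1 fun hle => hl5 (hsub ⟨hl₀ 5 (by decide), hle⟩)⟩
  · exact .inr ⟨not_le.1 fun hle => hh4 (hsub ⟨hle, hh₂ 4 (by decide)⟩),
      not_le.1 fun hle => hh5 (hsub ⟨hle, hh₂ 5 (by decide)⟩)⟩

theorem IsCircularArcModel.net_pendant_subset {A : Fin 6 → Set ℝ}
    (hA : IsCircularArcModel netGraph A) : A 3 ⊆ A 0 := by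
  intro x hx
  have hxI : x ∈ Ico 0 (2 * π) := hA.subset_Ico 3 hx
  have h0 := (hA.rotate x).net_zero_mem
    ⟨⟨le_rfl, two_pi_pos⟩, by rwa [zero_add, cmod_of_mem_Ico hxI]⟩
  simpa [cmod_of_mem_Ico hxI] using h0.2

theorem net_not_properCircularArcGraph : ¬ IsProperCircularArcGraph netGraph := by
  rintro ⟨A, hA, hproper⟩
  refine hproper 3 0 (ssubset_of_subset_of_ne hA.net_pendant_subset fun h => ?_)
  obtain ⟨z, hz0, hz1⟩ := (hA.2 0 1 (by decide)).1 (by decide)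
  exact (by decide : ¬ netGraph.Adj 1 3) ((hA.2 1 3 (by decide)).2 ⟨z, hz1, h ▸ hz0⟩)

theorem cdist_comm (p q : ℝ) : cdist p q = cdist q p := min_comm _ _

theorem cdist_le_of_mem_minor_arc {u v w : ℝ} (hw : cmod (w - u) ≤ cmod (v - u))
    (hminor : cmod (v - u) ≤ cmod (u - v)) :
    cdist u w ≤ cdist u v ∧ cdist w v ≤ cdist u v := by
  have huv : cdist u v = cmod (v - u) := min_eq_right hminor
  have hvw : cmod (v - w) = cmod (v - u) - cmod (w - u) := cmod_sub_of_le hw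
  exact ⟨(min_le_right _ _).trans (huv ▸ hw),
    (min_le_right _ _).trans (by rw [huv, hvw]; linarith [cmod_nonneg (w - u)])⟩

/-- `a` and `b` lie on the same one of the two arcs into which `p` and `q` cut the circle. -/
def SameSide (p q a b : ℝ) : Prop :=
  (cmod (a - p) < cmod (q - p) ↔ cmod (b - p) < cmod (q - p))

theorem SameSide.trans {p q a b c : ℝ} (hab : SameSide p q a b) (hbc : SameSide p q b c) :
    SameSide p q a c :=
  Iff.trans hab hbc

/-- If the chord `a b` crosses the chord `p q`, the shorter arc from `a` to `b` contains `p`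
or `q`. -/
theorem cdist_le_of_crossing {p q a b : ℝ} (haq : cmod (a - p) < cmod (q - p))
    (hqb : cmod (q - p) ≤ cmod (b - p)) :
    (cdist a p ≤ cdist a b ∧ cdist b p ≤ cdist a b) ∨
      (cdist a q ≤ cdist a b ∧ cdist b q ≤ cdist a b) := by
  have hba : cmod (b - a) = cmod (b - p) - cmod (a - p) := cmod_sub_of_le (by linarith)
  have hab : cmod (a - b) = cmod (a - p) - cmod (b - p) + 2 * π := cmod_sub_of_lt (by linarith)
  rcases le_total (cmod (b - a)) (cmod (a - b)) with hminor | hminor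
  · have hqa : cmod (q - a) = cmod (q - p) - cmod (a - p) := cmod_sub_of_le haq.le
    obtain ⟨h₁, h₂⟩ := cdist_le_of_mem_minor_arc (w := q) (by rw [hqa, hba]; linarith) hminor
    exact Or.inr ⟨h₁, cdist_comm b q ▸ h₂⟩
  · have hpb : cmod (p - b) = 2 * π - cmod (b - p) := by
      rw [cmod_sub_of_lt (p := p) (by rw [sub_self, cmod_zero]; linarith [cmod_nonneg (a - p)]),
        sub_self, cmod_zero, zero_sub, neg_add_eq_sub]
    obtain ⟨h₁, h₂⟩ := cdist_le_of_mem_minor_arc (w := p) (by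
      rw [hpb, hab]; linarith [cmod_nonneg (a - p)]) hminor
    rw [cdist_comm b a] at h₁ h₂
    exact Or.inl ⟨cdist_comm p a ▸ h₂, h₁⟩

theorem sameSide_of_cdist_lt {p q a b : ℝ} (hp : cdist a b < cdist a p ∨ cdist a b < cdist b p)
    (hq : cdist a b < cdist a q ∨ cdist a b < cdist b q) : SameSide p q a b := by
  have not_crossing : ∀ {a b : ℝ}, (cdist a b < cdist a p ∨ cdist a b < cdist b p) →
      (cdist a b < cdist a q ∨ cdist a b < cdist b q) →
      cmod (a - p) < cmod (q - p) → cmod (q - p) ≤ cmod (b - p) → False := by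
    intro a b hp hq haq hqb
    rcases cdist_le_of_crossing haq hqb with ⟨h₁, h₂⟩ | ⟨h₁, h₂⟩
    · rcases hp with h | h <;> linarith
    · rcases hq with h | h <;> linarith
  have hp' : cdist b a < cdist b p ∨ cdist b a < cdist a p := cdist_comm a b ▸ hp.symm
  have hq' : cdist b a < cdist b q ∨ cdist b a < cdist a q := cdist_comm a b ▸ hq.symm
  unfold SameSide
  rcases lt_or_ge (cmod (a - p)) (cmod (q - p)) with ha | ha <;>
    rcases lt_or_ge (cmod (b - p)) (cmod (q - p)) with hb | hb
  · exact iff_of_true ha hb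
  · exact (not_crossing hp hq ha hb).elim
  · exact (not_crossing hp' hq' hb ha).elim
  · exact iff_of_false ha.not_gt hb.not_gt

/-- Of the three ways to split four points on the circle into two pairs, one is crossing. -/
theorem not_all_pairings_sameSide {x p q r : ℝ} (hp : p ∈ Ico 0 (2 * π))
    (hq : q ∈ Ico 0 (2 * π)) (hr : r ∈ Ico 0 (2 * π)) (hpq : p ≠ q) (hpr : p ≠ r) (hqr : q ≠ r) :
    ¬ (SameSide q r x p ∧ SameSide p r x q ∧ SameSide p q x r) := by
  rintro ⟨h₁, h₂, h₃⟩
  have hq0 : 0 < cmod (q - p) := (cmod_nonneg _).lt_of_ne fun h =>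
    hpq (eq_of_cmod_sub_eq hp hq (by rw [sub_self, cmod_zero, h]))
  have hr0 : 0 < cmod (r - p) := (cmod_nonneg _).lt_of_ne fun h =>
    hpr (eq_of_cmod_sub_eq hp hr (by rw [sub_self, cmod_zero, h]))
  have hpq' : cmod (p - q) = 2 * π - cmod (q - p) := by
    rw [cmod_sub_of_lt (p := p) (by rwa [sub_self, cmod_zero]), sub_self, cmod_zero]
    ring
  unfold SameSide at h₁ h₂ h₃
  rcases lt_or_gt_of_ne fun h => hqr (eq_of_cmod_sub_eq hq hr h) with hqr | hrq
  · have hxr : cmod (x - p) < cmod (r - p) := h₂.2 hqr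
    have hqx : cmod (q - p) ≤ cmod (x - p) := not_lt.1 fun h => (h₃.1 h).not_gt hqr
    rw [cmod_sub_of_le hqx, cmod_sub_of_le hqr.le, hpq'] at h₁
    linarith [h₁.1 (by linarith), cmod_lt_two_pi (r - p)]
  · have hxq : cmod (x - p) < cmod (q - p) := h₃.2 hrq
    have hrx : cmod (r - p) ≤ cmod (x - p) := not_lt.1 fun h => (h₂.1 h).not_gt hrq
    rw [cmod_sub_of_lt hxq, cmod_sub_of_lt hrq, hpq'] at h₁
    linarith [h₁.2 (by linarith)]

theorem IsValidDrawing.sameSide {V : Type*} {G : SignedGraph V} {D : V → ℝ}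
    (hD : IsValidDrawing G D) {i j k l : V} (hij : G.pos.Adj i j)
    (hk : G.neg.Adj i k ∨ G.neg.Adj j k) (hl : G.neg.Adj i l ∨ G.neg.Adj j l) :
    SameSide (D k) (D l) (D i) (D j) :=
  have far {m : V} (hm : G.neg.Adj i m ∨ G.neg.Adj j m) :
      cdist (D i) (D j) < cdist (D i) (D m) ∨ cdist (D i) (D j) < cdist (D j) (D m) :=
    hm.imp (hD.2 i j m hij) fun h => cdist_comm (D i) (D j) ▸ hD.2 j i m hij.symm h
  sameSide_of_cdist_lt (far hk) (far hl)

theorem net_no_validDrawing :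
    ¬ ∃ D : Fin 6 → ℝ, IsValidDrawing ⟨netGraph, netGraphᶜ, fun _ _ h => h.2.2 h.1⟩ D := by
  rintro ⟨D, hD⟩
  have hne : ∀ i j : Fin 6, i ≠ j → D i ≠ D j := fun i j hij h => hij (hD.1.1 h)
  refine not_all_pairings_sameSide (x := D 0) (hD.1.2 3) (hD.1.2 4) (hD.1.2 5)
    (hne 3 4 (by decide)) (hne 3 5 (by decide)) (hne 4 5 (by decide)) ⟨?_, ?_, ?_⟩
  · exact hD.sameSide (i := 0) (j := 3) (by decide) (.inl (by decide)) (.inl (by decide))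
  · exact (hD.sameSide (i := 0) (j := 1) (by decide) (.inr (by decide)) (.inl (by decide))).trans
      (hD.sameSide (i := 1) (j := 4) (by decide) (.inl (by decide)) (.inl (by decide)))
  · exact (hD.sameSide (i := 0) (j := 2) (by decide) (.inr (by decide)) (.inl (by decide))).trans
      (hD.sameSide (i := 2) (j := 5) (by decide) (.inl (by decide)) (.inl (by decide)))

/-- The net is a circular arc graph but not a proper circular arc graph, and
hence the complete signed graph whose positive subgraph is the net has no
valid drawing in the circumference. -/
theorem net_not_proper_and_no_valid_drawing :
    IsCircularArcGraph netGraph ∧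
    ¬ IsProperCircularArcGraph netGraph ∧
    ¬ ∃ D : Fin 6 → ℝ,
        IsValidDrawing ⟨netGraph, netGraphᶜ, fun i j h => h.2.2 h.1⟩ D :=
  ⟨net_isCircularArcGraph, net_not_properCircularArcGraph, net_no_validDrawing⟩
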